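/- Let (Ω, F, μ) be a probability space, X : Ω → ℝ^d a measurable random vector with ‖X‖₂ ≤ R almost surely, U ∈ ℝ^{d×r} and Û ∈ ℝ^{d×r} matrices with UᵀU = I_r and ÛᵀÛ = I_r, g : ℝ^r → ℝ an L-Lipschitz function, f(x) = g(Uᵀx), P = UUᵀ, P̂ = ÛÛᵀ, and Z = ÛᵀX. Let G ⊆ F be the σ-algebra generated by Z, and assume f(X) is square-integrable. Then E[(f(X) − E[f(X) | G])²] ≤ L² R² ‖P − P̂‖₂², where E[· | G] denotes conditional expectation with respect to G and ‖·‖₂ denotes the spectral (operator) norm induced by the Euclidean norm. -/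

import Mathlib

open Matrix MeasureTheory

section AuxLemmas

set_option linter.unusedSectionVars false

variable {m n p : Type*} [Fintype m] [Fintype n] [Fintype p] [DecidableEq m] [DecidableEq n] [DecidableEq p]

lemma myToEuclideanLin_mul_apply (A : Matrix m n ℝ) (B : Matrix n p ℝ) (x : EuclideanSpace ℝ p) :
    Matrix.toEuclideanLin (A * B) x = Matrix.toEuclideanLin A (Matrix.toEuclideanLin B x) := by
  simp [Matrix.toEuclideanLin_apply, Matrix.mulVec_mulVec]

lemma myAdjoint (A : Matrix m n ℝ) :
    Matrix.toEuclideanLin Aᵀ = LinearMap.adjoint (Matrix.toEuclideanLin A) := by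
  rw [← Matrix.toEuclideanLin_conjTranspose_eq_adjoint]
  congr 1

lemma myNormEq (A : Matrix m n ℝ) (hA : Aᵀ * A = 1) (v : EuclideanSpace ℝ n) :
    ‖Matrix.toEuclideanLin A v‖ = ‖v‖ := by
  have h : (inner ℝ (Matrix.toEuclideanLin A v) (Matrix.toEuclideanLin A v) : ℝ)
      = inner ℝ v v := by
    rw [← LinearMap.adjoint_inner_left, ← myAdjoint, ← myToEuclideanLin_mul_apply, hA]
    simp [Matrix.toEuclideanLin_apply]
  rw [real_inner_self_eq_norm_mul_norm, real_inner_self_eq_norm_mul_norm] at h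
  exact mul_self_inj (norm_nonneg _) (norm_nonneg _) |>.mp h

lemma myNormLe (A : Matrix m n ℝ) (hA : Aᵀ * A = 1) (x : EuclideanSpace ℝ m) :
    ‖Matrix.toEuclideanLin Aᵀ x‖ ≤ ‖x‖ := by
  set t := ‖Matrix.toEuclideanLin Aᵀ x‖ with ht
  have h : t * t ≤ ‖x‖ * t := by
    have h1 : (inner ℝ (Matrix.toEuclideanLin Aᵀ x) (Matrix.toEuclideanLin Aᵀ x) : ℝ)
        = inner ℝ x (Matrix.toEuclideanLin A (Matrix.toEuclideanLin Aᵀ x)) := by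
      rw [myAdjoint, LinearMap.adjoint_inner_left]
    have h2 : (inner ℝ x (Matrix.toEuclideanLin A (Matrix.toEuclideanLin Aᵀ x)) : ℝ)
        ≤ ‖x‖ * t := by
      calc _ ≤ ‖x‖ * ‖Matrix.toEuclideanLin A (Matrix.toEuclideanLin Aᵀ x)‖ :=
            real_inner_le_norm _ _
        _ = ‖x‖ * t := by rw [myNormEq A hA]
    calc t * t = _ := (real_inner_self_eq_norm_mul_norm _).symm
      _ ≤ ‖x‖ * t := h1 ▸ h2
  rcases eq_or_lt_of_le (norm_nonneg (Matrix.toEuclideanLin Aᵀ x)) with h0 | h0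
  · rw [ht, ← h0]; exact norm_nonneg x
  · exact le_of_mul_le_mul_right h h0

end AuxLemmas

/-- The spectral norm (operator norm induced by the Euclidean norm) of a real
`d × d` matrix, i.e. its largest singular value. -/
noncomputable def specNorm {d : ℕ} (M : Matrix (Fin d) (Fin d) ℝ) : ℝ :=
  ‖(Matrix.toEuclideanCLM (𝕜 := ℝ) M :
      EuclideanSpace ℝ (Fin d) →L[ℝ] EuclideanSpace ℝ (Fin d))‖

lemma specNorm_bound {d : ℕ} (M : Matrix (Fin d) (Fin d) ℝ) (x : EuclideanSpace ℝ (Fin d)) :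
    ‖Matrix.toEuclideanLin M x‖ ≤ specNorm M * ‖x‖ := by
  have h : Matrix.toEuclideanLin M x = Matrix.toEuclideanCLM (𝕜 := ℝ) M x := by
    rw [← Matrix.coe_toEuclideanCLM_eq_toEuclideanLin]; rfl
  rw [h]
  exact (Matrix.toEuclideanCLM (𝕜 := ℝ) M).le_opNorm x

/-- **T₂ bound in the proof of Theorem 1 (conditional-expectation projection error).**
Let `(Ω, F, μ)` be a probability space and `X : Ω → ℝ^d` measurable with
`‖X‖₂ ≤ R` a.s. Let `U, Û ∈ ℝ^{d×r}` have orthonormal columns, let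
`g : ℝ^r → ℝ` be `L`-Lipschitz, `f(x) = g(Uᵀx)`, `P = UUᵀ`, `P̂ = ÛÛᵀ`, and
`Z = ÛᵀX`. Let `G` be the σ-algebra generated by `Z` and assume `f(X)` is
square-integrable. Then `E[(f(X) - E[f(X)|MeasurableSpace.comap Z inferInstance])²] ≤ L² R² ‖P - P̂‖₂²`. -/
theorem condexp_projection_error {d r : ℕ} {Ω : Type*} [MeasurableSpace Ω]
    (μ : Measure Ω) [IsProbabilityMeasure μ]
    (X : Ω → EuclideanSpace ℝ (Fin d)) (hX : Measurable X)
    (R : ℝ) (hR : ∀ᵐ ω ∂μ, ‖X ω‖ ≤ R)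
    (U Uhat : Matrix (Fin d) (Fin r) ℝ) (hU : Uᵀ * U = 1) (hUhat : Uhatᵀ * Uhat = 1)
    (L : ℝ) (g : EuclideanSpace ℝ (Fin r) → ℝ)
    (hg : ∀ z z' : EuclideanSpace ℝ (Fin r), |g z - g z'| ≤ L * ‖z - z'‖)
    (f : EuclideanSpace ℝ (Fin d) → ℝ)
    (hf : ∀ x, f x = g (Matrix.toEuclideanLin Uᵀ x))
    (Z : Ω → EuclideanSpace ℝ (Fin r))
    (hZ : ∀ ω, Z ω = Matrix.toEuclideanLin Uhatᵀ (X ω))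
    (G : MeasurableSpace Ω) (hG : G = MeasurableSpace.comap Z inferInstance)
    (hL2 : MemLp (fun ω => f (X ω)) 2 μ) :
    ∫ ω, (f (X ω) - (μ[fun ω => f (X ω)|G]) ω) ^ 2 ∂μ ≤
      L ^ 2 * R ^ 2 * specNorm (U * Uᵀ - Uhat * Uhatᵀ) ^ 2 := by
  -- Setup
  subst hG
  haveI : (Filter.NeBot (ae μ)) := ae_neBot.mpr (IsProbabilityMeasure.ne_zero μ)
  obtain ⟨ω₀, hω₀⟩ := hR.exists
  have hR0 : 0 ≤ R := le_trans (norm_nonneg _) hω₀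
  set s : ℝ := specNorm (U * Uᵀ - Uhat * Uhatᵀ) with hs
  have hs0 : 0 ≤ s := norm_nonneg _
  set C : ℝ := |L| * (s * R) with hC
  have hC0 : 0 ≤ C := mul_nonneg (abs_nonneg L) (mul_nonneg hs0 hR0)
  have hg' : ∀ z z' : EuclideanSpace ℝ (Fin r), |g z - g z'| ≤ |L| * ‖z - z'‖ := fun z z' =>
    le_trans (hg z z') (mul_le_mul_of_nonneg_right (le_abs_self L) (norm_nonneg _))
  -- G is a sub-σ-algebra
  have hZeq : Z = fun ω => Matrix.toEuclideanLin Uhatᵀ (X ω) := funext hZ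
  have hZmeas : Measurable Z := by
    rw [hZeq]
    exact (Matrix.toEuclideanLin Uhatᵀ).continuous_of_finiteDimensional.measurable.comp hX
  have hm : MeasurableSpace.comap Z inferInstance ≤ ‹MeasurableSpace Ω› := hZmeas.comap_le
  haveI : SigmaFinite (μ.trim hm) := by infer_instance
  -- the candidate G-measurable approximant
  set F : Ω → ℝ := fun ω => f (X ω) with hF
  set h : Ω → ℝ := fun ω => g (Matrix.toEuclideanLin (Uᵀ * (Uhat * Uhatᵀ)) (X ω)) with hh
  -- g is continuous
  have hgcont : Continuous g := by
    have : LipschitzWith ‖L‖₊ g := LipschitzWith.of_dist_le_mul fun z z' => by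
      simpa [Real.dist_eq, dist_eq_norm] using hg' z z'
    exact this.continuous
  -- h is G-measurable
  have hhG : StronglyMeasurable[MeasurableSpace.comap Z inferInstance] h := by
    have hZG : Measurable[MeasurableSpace.comap Z inferInstance] Z :=
      Measurable.of_comap_le le_rfl
    have hcomp : h = fun ω => g (Matrix.toEuclideanLin (Uᵀ * Uhat) (Z ω)) := by
      funext ω
      rw [hh, hZ ω, ← myToEuclideanLin_mul_apply, Matrix.mul_assoc]
    rw [hcomp]
    exact ((hgcont.comp
      (Matrix.toEuclideanLin (Uᵀ * Uhat)).continuous_of_finiteDimensional).measurable.comp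
      hZG).stronglyMeasurable
  have hhsm : AEStronglyMeasurable h μ := (hhG.mono hm).aestronglyMeasurable
  have hFsm : AEStronglyMeasurable F μ := hL2.aestronglyMeasurable
  -- key pointwise bound
  have hkey : ∀ᵐ ω ∂μ, |F ω - h ω| ≤ C := by
    filter_upwards [hR] with ω hω
    set x := X ω with hx
    have e1 : Matrix.toEuclideanLin (Uᵀ * (Uhat * Uhatᵀ)) x
        = Matrix.toEuclideanLin Uᵀ (Matrix.toEuclideanLin (Uhat * Uhatᵀ) x) :=
      myToEuclideanLin_mul_apply _ _ _
    have e2 : Matrix.toEuclideanLin Uᵀ x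
        = Matrix.toEuclideanLin Uᵀ (Matrix.toEuclideanLin (U * Uᵀ) x) := by
      rw [← myToEuclideanLin_mul_apply]
      congr 1
      rw [← Matrix.mul_assoc, hU, Matrix.one_mul]
    have e3 : Matrix.toEuclideanLin (U * Uᵀ) x - Matrix.toEuclideanLin (Uhat * Uhatᵀ) x
        = Matrix.toEuclideanLin (U * Uᵀ - Uhat * Uhatᵀ) x := by
      rw [map_sub Matrix.toEuclideanLin (U * Uᵀ) (Uhat * Uhatᵀ), LinearMap.sub_apply]
    calc |F ω - h ω|
        = |g (Matrix.toEuclideanLin Uᵀ x) - g (Matrix.toEuclideanLin (Uᵀ * (Uhat * Uhatᵀ)) x)| := by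
          simp only [hF, hh, hf, hx]
      _ ≤ |L| * ‖Matrix.toEuclideanLin Uᵀ x - Matrix.toEuclideanLin (Uᵀ * (Uhat * Uhatᵀ)) x‖ :=
          hg' _ _
      _ = |L| * ‖Matrix.toEuclideanLin Uᵀ
            (Matrix.toEuclideanLin (U * Uᵀ) x - Matrix.toEuclideanLin (Uhat * Uhatᵀ) x)‖ := by
          rw [e1]; nth_rewrite 1 [e2]; rw [map_sub]
      _ ≤ |L| * ‖Matrix.toEuclideanLin (U * Uᵀ) x - Matrix.toEuclideanLin (Uhat * Uhatᵀ) x‖ :=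
          mul_le_mul_of_nonneg_left (myNormLe U hU _) (abs_nonneg L)
      _ = |L| * ‖Matrix.toEuclideanLin (U * Uᵀ - Uhat * Uhatᵀ) x‖ := by rw [e3]
      _ ≤ |L| * (s * ‖x‖) := mul_le_mul_of_nonneg_left (specNorm_bound _ _) (abs_nonneg L)
      _ ≤ |L| * (s * R) := by
          exact mul_le_mul_of_nonneg_left (mul_le_mul_of_nonneg_left hω hs0) (abs_nonneg L)
  -- integrability of F and h
  have hFint : Integrable F μ := hL2.integrable one_le_two
  have hhint : Integrable h μ := by
    refine Integrable.mono' (hFint.abs.add (integrable_const C)) hhsm ?_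
    filter_upwards [hkey] with ω hω
    have h1 : |h ω| ≤ |F ω| + C := by
      have h2 := abs_sub_abs_le_abs_sub (h ω) (F ω)
      have h3 := abs_sub_comm (h ω) (F ω)
      linarith
    calc ‖h ω‖ = |h ω| := Real.norm_eq_abs _
      _ ≤ |F ω| + C := h1
      _ = (((fun ω => |F ω|) + fun _ => C : Ω → ℝ)) ω := rfl
  -- D := F - h, bounded a.e. by C
  set D : Ω → ℝ := fun ω => F ω - h ω with hD
  have hDsm : AEStronglyMeasurable D μ := hFsm.sub hhsm
  have hDint : Integrable D μ := hFint.sub hhint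
  have hDbd : ∀ᵐ ω ∂μ, |D ω| ≤ C := hkey
  have hDL2 : MemLp D 2 μ := MemLp.of_bound hDsm C (by
    filter_upwards [hDbd] with ω hω; simpa [Real.norm_eq_abs] using hω)
  -- k := conditional expectation of D
  set k : Ω → ℝ := μ[D|MeasurableSpace.comap Z inferInstance] with hk
  have hkG : StronglyMeasurable[MeasurableSpace.comap Z inferInstance] k := stronglyMeasurable_condExp
  have hksm : AEStronglyMeasurable k μ := (hkG.mono hm).aestronglyMeasurable
  have hkbd : ∀ᵐ ω ∂μ, |k ω| ≤ C := by
    have : ∀ᵐ ω ∂μ, |D ω| ≤ (C.toNNReal : ℝ) := by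
      filter_upwards [hDbd] with ω hω
      rwa [Real.coe_toNNReal C hC0]
    have h2 := ae_bdd_condExp_of_ae_bdd (m := MeasurableSpace.comap Z inferInstance) (μ := μ) this
    filter_upwards [h2] with ω hω
    rwa [Real.coe_toNNReal C hC0] at hω
  have hkL2 : MemLp k 2 μ := MemLp.of_bound hksm C (by
    filter_upwards [hkbd] with ω hω; simpa [Real.norm_eq_abs] using hω)
  have hkint : Integrable k μ := integrable_condExp
  -- E[F|MeasurableSpace.comap Z inferInstance] = h + k a.e.
  have hFhD : F = fun ω => h ω + D ω := by funext ω; rw [hD]; ring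
  have hcondh : μ[h|MeasurableSpace.comap Z inferInstance] = h := condExp_of_stronglyMeasurable hm hhG hhint
  have hE : μ[F|MeasurableSpace.comap Z inferInstance] =ᵐ[μ] fun ω => h ω + k ω := by
    calc μ[F|MeasurableSpace.comap Z inferInstance] = μ[fun ω => h ω + D ω|MeasurableSpace.comap Z inferInstance] := by rw [← hFhD]
      _ =ᵐ[μ] μ[h|MeasurableSpace.comap Z inferInstance] + μ[D|MeasurableSpace.comap Z inferInstance] := condExp_add hhint hDint _
      _ = fun ω => h ω + k ω := by rw [hcondh]; rfl
  -- rewrite the goal integrand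
  have hgoal_eq : ∫ ω, (F ω - (μ[F|MeasurableSpace.comap Z inferInstance]) ω) ^ 2 ∂μ = ∫ ω, (D ω - k ω) ^ 2 ∂μ := by
    refine integral_congr_ae ?_
    filter_upwards [hE] with ω hω
    rw [hω]
    simp only [hD]
    ring
  -- integrability of squares and products
  have hD2int : Integrable (fun ω => D ω ^ 2) μ := hDL2.integrable_sq
  have hk2int : Integrable (fun ω => k ω ^ 2) μ := hkL2.integrable_sq
  have hkDint : Integrable (fun ω => k ω * D ω) μ := by
    refine Integrable.mono' (hDint.abs.const_mul C) (hksm.mul hDsm) ?_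
    filter_upwards [hkbd] with ω hω
    rw [Real.norm_eq_abs, abs_mul]
    exact mul_le_mul_of_nonneg_right hω (abs_nonneg _)
  -- the cross term: ∫ k·D = ∫ k²
  have hpull : μ[fun ω => k ω * D ω|MeasurableSpace.comap Z inferInstance] =ᵐ[μ] fun ω => k ω * k ω := by
    have := condExp_mul_of_stronglyMeasurable_left hkG (g := D) (by exact hkDint) hDint
    calc μ[fun ω => k ω * D ω|MeasurableSpace.comap Z inferInstance] = μ[k * D|MeasurableSpace.comap Z inferInstance] := rfl
      _ =ᵐ[μ] k * μ[D|MeasurableSpace.comap Z inferInstance] := this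
      _ = fun ω => k ω * k ω := rfl
  have hcross : ∫ ω, k ω * D ω ∂μ = ∫ ω, k ω * k ω ∂μ := by
    rw [← integral_condExp hm (f := fun ω => k ω * D ω)]
    exact integral_congr_ae hpull
  -- expand the square
  have hexp : ∫ ω, (D ω - k ω) ^ 2 ∂μ
      = ∫ ω, D ω ^ 2 ∂μ - 2 * ∫ ω, k ω * D ω ∂μ + ∫ ω, k ω ^ 2 ∂μ := by
    have e : ∀ ω, (D ω - k ω) ^ 2 = D ω ^ 2 - 2 * (k ω * D ω) + k ω ^ 2 := fun ω => by ring
    have h2kD : Integrable (fun ω => 2 * (k ω * D ω)) μ := hkDint.const_mul 2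
    have hsub : Integrable (fun ω => D ω ^ 2 - 2 * (k ω * D ω)) μ := by
      exact hD2int.sub h2kD
    calc ∫ ω, (D ω - k ω) ^ 2 ∂μ
        = ∫ ω, (D ω ^ 2 - 2 * (k ω * D ω) + k ω ^ 2) ∂μ := by
          exact integral_congr_ae (Filter.Eventually.of_forall e)
      _ = ∫ ω, (D ω ^ 2 - 2 * (k ω * D ω)) ∂μ + ∫ ω, k ω ^ 2 ∂μ := by
          rw [integral_add hsub hk2int]
      _ = ∫ ω, D ω ^ 2 ∂μ - ∫ ω, 2 * (k ω * D ω) ∂μ + ∫ ω, k ω ^ 2 ∂μ := by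
          rw [integral_sub hD2int h2kD]
      _ = ∫ ω, D ω ^ 2 ∂μ - 2 * ∫ ω, k ω * D ω ∂μ + ∫ ω, k ω ^ 2 ∂μ := by
          rw [integral_const_mul 2]
  have hk2eq : ∫ ω, k ω * k ω ∂μ = ∫ ω, k ω ^ 2 ∂μ := by
    refine integral_congr_ae (Filter.Eventually.of_forall fun ω => ?_)
    ring
  have hk2nonneg : 0 ≤ ∫ ω, k ω ^ 2 ∂μ :=
    integral_nonneg fun ω => sq_nonneg _
  -- ∫ D² ≤ C²
  have hD2le : ∫ ω, D ω ^ 2 ∂μ ≤ C ^ 2 := by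
    have : ∫ ω, D ω ^ 2 ∂μ ≤ ∫ _, C ^ 2 ∂μ := by
      refine integral_mono_of_nonneg (Filter.Eventually.of_forall fun ω => sq_nonneg _)
        (integrable_const _) ?_
      filter_upwards [hDbd] with ω hω
      calc D ω ^ 2 = |D ω| ^ 2 := (sq_abs _).symm
        _ ≤ C ^ 2 := pow_le_pow_left₀ (abs_nonneg _) hω 2
    simpa [measure_univ] using this
  -- put it together
  have hfinal : ∫ ω, (D ω - k ω) ^ 2 ∂μ ≤ C ^ 2 := by
    rw [hexp, hcross, hk2eq]
    linarith
  have hCsq : C ^ 2 = L ^ 2 * R ^ 2 * s ^ 2 := by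
    rw [hC, mul_pow, sq_abs, mul_pow]
    ring
  calc ∫ ω, (F ω - (μ[F|MeasurableSpace.comap Z inferInstance]) ω) ^ 2 ∂μ = ∫ ω, (D ω - k ω) ^ 2 ∂μ := hgoal_eq
    _ ≤ C ^ 2 := hfinal
    _ = L ^ 2 * R ^ 2 * s ^ 2 := hCsq
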